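/- For all integers p and q, the identity P_{pq,p²,q²}(t) = (t − pq)·(t + pq)·Q_{p,q}(t) holds in ℤ[t]. -/

import Mathlib

open Polynomial

/-- The cuboid polynomial `P_{a,b,u}(t) ∈ ℤ[t]`. -/
noncomputable def cuboidPoly (a b u : ℤ) : Polynomial ℤ :=
  X ^ 12 + C (6 * u ^ 2 - 2 * a ^ 2 - 2 * b ^ 2) * X ^ 10
    + C (u ^ 4 + b ^ 4 + a ^ 4 + 4 * a ^ 2 * u ^ 2 + 4 * b ^ 2 * u ^ 2
        - 12 * a ^ 2 * b ^ 2) * X ^ 8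
    + C (6 * a ^ 4 * u ^ 2 + 6 * b ^ 4 * u ^ 2 - 8 * a ^ 2 * b ^ 2 * u ^ 2
        - 2 * a ^ 2 * u ^ 4 - 2 * b ^ 2 * u ^ 4 - 2 * a ^ 4 * b ^ 2
        - 2 * a ^ 2 * b ^ 4) * X ^ 6
    + C (4 * a ^ 2 * b ^ 4 * u ^ 2 + 4 * a ^ 4 * b ^ 2 * u ^ 2
        - 12 * a ^ 2 * b ^ 2 * u ^ 4 + a ^ 4 * u ^ 4 + b ^ 4 * u ^ 4
        + a ^ 4 * b ^ 4) * X ^ 4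
    + C (6 * a ^ 4 * b ^ 4 * u ^ 2 - 2 * a ^ 4 * b ^ 2 * u ^ 4
        - 2 * a ^ 2 * b ^ 4 * u ^ 4) * X ^ 2
    + C (a ^ 4 * b ^ 4 * u ^ 4)

/-- The polynomial `Q_{p,q}(t) ∈ ℤ[t]`. -/
noncomputable def cuboidPolyQ (p q : ℤ) : Polynomial ℤ :=
  X ^ 10 + C ((2 * q ^ 2 + p ^ 2) * (3 * q ^ 2 - 2 * p ^ 2)) * X ^ 8
    + C (q ^ 8 + 10 * p ^ 2 * q ^ 6 + 4 * p ^ 4 * q ^ 4 - 14 * p ^ 6 * q ^ 2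
        + p ^ 8) * X ^ 6
    - C (p ^ 2 * q ^ 2 * (q ^ 8 - 14 * p ^ 2 * q ^ 6 + 4 * p ^ 4 * q ^ 4
        + 10 * p ^ 6 * q ^ 2 + p ^ 8)) * X ^ 4
    - C (p ^ 6 * q ^ 6 * (q ^ 2 + 2 * p ^ 2) * (3 * p ^ 2 - 2 * q ^ 2)) * X ^ 2
    - C (p ^ 10 * q ^ 10)
theorem cuboidPoly_special_factorization (p q : ℤ) :
    cuboidPoly (p * q) (p ^ 2) (q ^ 2)
      = (X - C (p * q)) * (X + C (p * q)) * cuboidPolyQ p q := by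
  simp only [cuboidPoly, cuboidPolyQ, map_add, map_sub, map_mul, map_pow, map_ofNat]
  ring
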